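/- arXiv:1901.11404 — 3 statements merged into one kernel-verified Lean document; each statement's English description precedes it below -/
import Mathlib

section
/- The integral ∫_{0}^{∞} e^{−x} · ln x dx equals −γ, where γ is the Euler–Mascheroni constant. -/
open Set Real

theorem integral_exp_neg_mul_log :
    ∫ x in Set.Ioi (0 : ℝ), Real.exp (-x) * Real.log x =
      -Real.eulerMascheroniConstant := by
  have h1 : HasDerivAt Complex.GammaIntegral
      (∫ t : ℝ in Ioi 0, (t : ℂ) ^ ((1 : ℂ) - 1) * (Real.log t * Real.exp (-t))) 1 :=
    Complex.hasDerivAt_GammaIntegral (by norm_num)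
  have heq : Complex.GammaIntegral =ᶠ[nhds (1 : ℂ)] Complex.Gamma := by
    filter_upwards [Complex.continuous_re.continuousAt.preimage_mem_nhds
      (isOpen_Ioi.mem_nhds (by norm_num : (0:ℝ) < (1:ℂ).re))] with s hs
    exact (Complex.Gamma_eq_integral hs).symm
  have h2 : HasDerivAt Complex.Gamma
      (∫ t : ℝ in Ioi 0, (t : ℂ) ^ ((1 : ℂ) - 1) * (Real.log t * Real.exp (-t))) 1 :=
    h1.congr_of_eventuallyEq heq.symm
  have h3 := h2.unique Complex.hasDerivAt_Gamma_one
  have h4 : (∫ t : ℝ in Ioi 0, (t : ℂ) ^ ((1 : ℂ) - 1) * (Real.log t * Real.exp (-t)))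
      = ((∫ t : ℝ in Ioi 0, Real.exp (-t) * Real.log t : ℝ) : ℂ) := by
    rw [MeasureTheory.setIntegral_congr_fun measurableSet_Ioi
      (fun t ht => by push_cast; rw [sub_self, Complex.cpow_zero, one_mul, mul_comm] :
        Set.EqOn _ (fun t : ℝ => ((Real.exp (-t) * Real.log t : ℝ) : ℂ)) (Ioi 0))]
    exact integral_ofReal
  rw [h4] at h3
  exact_mod_cast h3
end

section
/- For every real number σ > 0, the integral ∫_{0}^{∞} (ln r) · (r/σ²) e^{−r²/(2σ²)} dr equals ln σ + (ln 2)/2 − γ/2, where γ is the Euler–Mascheroni constant. -/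
open MeasureTheory Set Real Filter

lemma abs_log_le_aux {x : ℝ} (hx : 0 < x) :
    |Real.log x| ≤ 2 * x ^ (-(1/2) : ℝ) + x := by
  have hy : 0 < x ^ (-(1/2) : ℝ) := Real.rpow_pos_of_pos hx _
  rcases le_total x 1 with h | h
  · rw [abs_of_nonpos (Real.log_nonpos hx.le h)]
    have hlog : Real.log (x ^ (-(1/2) : ℝ)) = -(1/2) * Real.log x := Real.log_rpow hx _
    have := Real.log_le_sub_one_of_pos hy
    nlinarith [hx.le]
  · rw [abs_of_nonneg (Real.log_nonneg h)]
    have := Real.log_le_sub_one_of_pos hx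
    nlinarith

lemma integrableOn_log_mul_exp_neg :
    IntegrableOn (fun t : ℝ => Real.log t * Real.exp (-t)) (Set.Ioi 0) := by
  have h1 := Real.GammaIntegral_convergent (s := 1/2) (by norm_num)
  have h2 := Real.GammaIntegral_convergent (s := 2) (by norm_num)
  have hbound : IntegrableOn (fun t : ℝ =>
      2 * (Real.exp (-t) * t ^ ((1/2 : ℝ) - 1)) + Real.exp (-t) * t ^ ((2 : ℝ) - 1))
      (Set.Ioi 0) := (h1.const_mul 2).add h2
  refine hbound.integrable.mono ?_ ?_
  · exact ((Real.measurable_log.mul (measurable_exp.comp measurable_neg)).aestronglyMeasurable)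
  · refine (ae_restrict_iff' measurableSet_Ioi).2 (ae_of_all _ fun t ht => ?_)
    have ht0 : (0:ℝ) < t := ht
    have he : 0 < Real.exp (-t) := Real.exp_pos _
    have h12 : t ^ ((1/2 : ℝ) - 1) = t ^ (-(1/2) : ℝ) := by norm_num
    have h21 : t ^ ((2 : ℝ) - 1) = t := by
      rw [show (2:ℝ) - 1 = (1:ℝ) by norm_num, Real.rpow_one]
    have hb := abs_log_le_aux ht0
    have hpos : 0 ≤ 2 * (Real.exp (-t) * t ^ ((1/2 : ℝ) - 1)) + Real.exp (-t) * t ^ ((2 : ℝ) - 1) := by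
      have := Real.rpow_pos_of_pos ht0 ((1/2 : ℝ) - 1)
      have := Real.rpow_pos_of_pos ht0 ((2 : ℝ) - 1)
      positivity
    rw [Real.norm_eq_abs, Real.norm_eq_abs, abs_of_nonneg hpos, abs_mul,
      abs_of_nonneg he.le, h12, h21]
    nlinarith [Real.rpow_pos_of_pos ht0 (-(1/2) : ℝ)]

lemma integral_log_mul_exp_neg :
    ∫ t in Set.Ioi (0:ℝ), Real.log t * Real.exp (-t) = -Real.eulerMascheroniConstant := by
  have hd := Complex.hasDerivAt_GammaIntegral (s := 1) (by norm_num)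
  have hopen : IsOpen {z : ℂ | 0 < z.re} := isOpen_lt continuous_const Complex.continuous_re
  have heq : Complex.Gamma =ᶠ[nhds (1:ℂ)] Complex.GammaIntegral := by
    filter_upwards [hopen.mem_nhds (by norm_num [Complex.one_re] : (1:ℂ) ∈ {z : ℂ | 0 < z.re})]
      with z hz
    exact Complex.Gamma_eq_integral hz
  have hd' : HasDerivAt Complex.Gamma
      (∫ t in Set.Ioi (0:ℝ), (t:ℂ) ^ ((1:ℂ) - 1) * (Real.log t * Real.exp (-t))) 1 :=
    hd.congr_of_eventuallyEq heq
  have huniq := hd'.unique Complex.hasDerivAt_Gamma_one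
  have hI : (∫ t in Set.Ioi (0:ℝ), (t:ℂ) ^ ((1:ℂ) - 1) * (Real.log t * Real.exp (-t)))
      = ((∫ t in Set.Ioi (0:ℝ), Real.log t * Real.exp (-t) : ℝ) : ℂ) := by
    rw [show (fun t : ℝ => (t:ℂ) ^ ((1:ℂ) - 1) * (Real.log t * Real.exp (-t)))
        = fun t : ℝ => ((Real.log t * Real.exp (-t) : ℝ) : ℂ) by
      funext t; simp]
    exact integral_ofReal
  rw [hI] at huniq
  exact_mod_cast huniq

theorem logRayleigh_mean (σ : ℝ) (hσ : 0 < σ) :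
    ∫ r in Set.Ioi (0 : ℝ),
        Real.log r * ((r / σ ^ 2) * Real.exp (-r ^ 2 / (2 * σ ^ 2))) =
      Real.log σ + Real.log 2 / 2 - Real.eulerMascheroniConstant / 2 := by
  have hσ2 : (0:ℝ) < σ ^ 2 := by positivity
  have h2σ2 : (0:ℝ) < 2 * σ ^ 2 := by positivity
  set c : ℝ := Real.log σ + Real.log 2 / 2 with hc
  set g : ℝ → ℝ := fun t => (c + Real.log t / 2) * Real.exp (-t) with hgdef
  set f : ℝ → ℝ := fun x => x ^ 2 / (2 * σ ^ 2) with hfdef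
  set f' : ℝ → ℝ := fun x => x / σ ^ 2 with hf'def
  -- exp integrable
  have hexp : IntegrableOn (fun t : ℝ => Real.exp (-t)) (Set.Ioi 0) := by
    have h := exp_neg_integrableOn_Ioi 0 (one_pos (α := ℝ))
    refine h.congr_fun (fun x _ => by norm_num) measurableSet_Ioi
  have hgInt : IntegrableOn g (Set.Ioi 0) := by
    have hrw : g = fun t => c * Real.exp (-t) + (1/2) * (Real.log t * Real.exp (-t)) := by
      funext t; simp only [hgdef]; ring
    rw [hrw]
    exact (hexp.const_mul c).add (integrableOn_log_mul_exp_neg.const_mul (1/2))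
  have himg_Ioi : f '' Set.Ioi 0 ⊆ Set.Ioi 0 := by
    rintro _ ⟨x, hx, rfl⟩
    exact div_pos (pow_pos hx 2) h2σ2
  have himg_Ici : f '' Set.Ici 0 ⊆ Set.Ici 0 := by
    rintro _ ⟨x, hx, rfl⟩
    exact div_nonneg (pow_nonneg hx 2) h2σ2.le
  -- pointwise equality
  have heqOn : ∀ r ∈ Set.Ioi (0:ℝ),
      Real.log r * ((r / σ ^ 2) * Real.exp (-r ^ 2 / (2 * σ ^ 2))) = (g ∘ f) r * f' r := by
    intro r hr
    have hr0 : (0:ℝ) < r := hr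
    have hlog : Real.log (r ^ 2 / (2 * σ ^ 2))
        = 2 * Real.log r - (Real.log 2 + 2 * Real.log σ) := by
      rw [Real.log_div (by positivity) h2σ2.ne', Real.log_mul two_ne_zero hσ2.ne',
        Real.log_pow, Real.log_pow]
      push_cast; ring
    have hco : c + Real.log (r ^ 2 / (2 * σ ^ 2)) / 2 = Real.log r := by
      rw [hlog, hc]; ring
    simp only [Function.comp, hgdef, hfdef, hf'def, hco, neg_div]
    ring
  -- integrability of the original integrand
  have hb : (0:ℝ) < 1 / (2 * σ ^ 2) := by positivity
  have hG : IntegrableOn (fun x : ℝ =>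
      (2 * (x ^ ((1/2):ℝ) * Real.exp (-(1/(2*σ^2)) * x ^ 2))
        + x ^ ((2:ℝ)) * Real.exp (-(1/(2*σ^2)) * x ^ 2)) / σ ^ 2) (Set.Ioi 0) :=
    (((integrableOn_rpow_mul_exp_neg_mul_sq hb (by norm_num : (-1:ℝ) < 1/2)).const_mul 2).add
      (integrableOn_rpow_mul_exp_neg_mul_sq hb (by norm_num : (-1:ℝ) < 2))).div_const _
  have hInt0 : IntegrableOn
      (fun r : ℝ => Real.log r * ((r / σ ^ 2) * Real.exp (-r ^ 2 / (2 * σ ^ 2))))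
      (Set.Ioi 0) := by
    refine hG.integrable.mono ?_ ?_
    · apply Measurable.aestronglyMeasurable
      measurability
    · refine (ae_restrict_iff' measurableSet_Ioi).2 (ae_of_all _ fun x hx => ?_)
      have hx0 : (0:ℝ) < x := hx
      have hE : (0:ℝ) < Real.exp (-x ^ 2 / (2 * σ ^ 2)) := Real.exp_pos _
      have hEeq : Real.exp (-(1/(2*σ^2)) * x ^ 2) = Real.exp (-x ^ 2 / (2 * σ ^ 2)) := by
        congr 1; field_simp
      have hy : (0:ℝ) < x ^ (-(1/2):ℝ) := Real.rpow_pos_of_pos hx0 _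
      have e1 : x ^ ((1/2):ℝ) = x ^ (-(1/2):ℝ) * x := by
        have h := Real.rpow_add hx0 (-(1/2)) 1
        rw [Real.rpow_one] at h
        norm_num at h
        exact h
      have e2 : x ^ ((2:ℝ)) = x ^ 2 := by
        rw [show ((2:ℝ)) = ((2:ℕ):ℝ) by norm_num, Real.rpow_natCast]
      have hlb := abs_log_le_aux hx0
      have hGpos : (0:ℝ) ≤ (2 * (x ^ ((1/2):ℝ) * Real.exp (-(1/(2*σ^2)) * x ^ 2))
          + x ^ ((2:ℝ)) * Real.exp (-(1/(2*σ^2)) * x ^ 2)) / σ ^ 2 := by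
        have := Real.rpow_pos_of_pos hx0 ((1/2):ℝ)
        have := Real.rpow_pos_of_pos hx0 ((2:ℝ))
        positivity
      rw [Real.norm_eq_abs, Real.norm_eq_abs, abs_of_nonneg hGpos, abs_mul,
        abs_of_nonneg (by positivity : (0:ℝ) ≤ (x / σ ^ 2) * Real.exp (-x ^ 2 / (2 * σ ^ 2))),
        hEeq, e1, e2]
      calc |Real.log x| * ((x / σ ^ 2) * Real.exp (-x ^ 2 / (2 * σ ^ 2)))
          = (|Real.log x| * (x * Real.exp (-x ^ 2 / (2 * σ ^ 2)))) / σ ^ 2 := by ring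
        _ ≤ ((2 * x ^ (-(1/2):ℝ) + x) * (x * Real.exp (-x ^ 2 / (2 * σ ^ 2)))) / σ ^ 2 := by
            gcongr
        _ = (2 * (x ^ (-(1/2):ℝ) * x * Real.exp (-x ^ 2 / (2 * σ ^ 2)))
              + x ^ 2 * Real.exp (-x ^ 2 / (2 * σ ^ 2))) / σ ^ 2 := by ring
  -- apply the substitution theorem
  have hsub := MeasureTheory.integral_comp_mul_deriv_Ioi (f := f) (f' := f') (g := g) (a := 0)
    (by fun_prop : ContinuousOn f (Set.Ici 0))
    ((tendsto_pow_atTop two_ne_zero).atTop_div_const h2σ2)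
    (fun x hx => by
      have h := (hasDerivAt_pow 2 x).div_const (2 * σ ^ 2)
      have heq : (↑2 * x ^ (2 - 1)) / (2 * σ ^ 2) = x / σ ^ 2 := by
        field_simp; ring
      exact (heq ▸ h).hasDerivWithinAt)
    (by
      refine ContinuousOn.mono ?_ himg_Ioi
      refine ContinuousOn.mul (ContinuousOn.add continuousOn_const ?_)
        (Real.continuous_exp.comp continuous_neg).continuousOn
      exact (Real.continuousOn_log.mono (fun x hx => ne_of_gt hx)).div_const 2)
    ((Iff.mpr integrableOn_Ici_iff_integrableOn_Ioi hgInt).mono_set himg_Ici)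
    (by
      rw [integrableOn_Ici_iff_integrableOn_Ioi]
      exact hInt0.congr_fun heqOn measurableSet_Ioi)
  have hf0 : f 0 = 0 := by simp [hfdef]
  rw [hf0] at hsub
  rw [MeasureTheory.setIntegral_congr_fun measurableSet_Ioi heqOn, hsub]
  -- compute the integral of g
  have hrw : ∀ t : ℝ, g t = c * Real.exp (-t) + (1/2) * (Real.log t * Real.exp (-t)) := by
    intro t; simp only [hgdef]; ring
  rw [MeasureTheory.integral_congr_ae (ae_of_all _ hrw),
    MeasureTheory.integral_add (hexp.const_mul c) (integrableOn_log_mul_exp_neg.const_mul (1/2)),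
    MeasureTheory.integral_const_mul, MeasureTheory.integral_const_mul,
    integral_exp_neg_Ioi_zero, integral_log_mul_exp_neg, hc]
  ring
end

section
/- For all real numbers c > 0 and σ > 0, the integral ∫_{0}^{∞} log₂(c · r²) · (r/σ²) e^{−r²/(2σ²)} dr equals (2/ln 2) · ( ln(√c · σ) + (ln 2)/2 − γ/2 ), where γ is the Euler–Mascheroni constant. -/
open MeasureTheory Set Real Filter

theorem hbs_high_snr_se (c σ : ℝ) (hc : 0 < c) (hσ : 0 < σ) :
    ∫ r in Set.Ioi (0 : ℝ),
        Real.logb 2 (c * r ^ 2) * ((r / σ ^ 2) * Real.exp (-r ^ 2 / (2 * σ ^ 2))) =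
      (2 / Real.log 2) *
        (Real.log (Real.sqrt c * σ) + Real.log 2 / 2 - Real.eulerMascheroniConstant / 2) := by
  have hσ2 : (0:ℝ) < σ ^ 2 := by positivity
  set f : ℝ → ℝ := fun r => r ^ 2 / (2 * σ ^ 2) with hf
  set g : ℝ → ℝ := fun u => Real.logb 2 (2 * c * σ ^ 2 * u) * Real.exp (-u) with hg
  have hderiv : ∀ x ∈ Set.Ioi (0:ℝ), HasDerivWithinAt f (x / σ ^ 2) (Set.Ioi 0) x := by
    intro x hx
    have h1 : HasDerivAt f (2 * x ^ 1 / (2 * σ ^ 2)) x := by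
      simpa using (hasDerivAt_pow 2 x).div_const (2 * σ ^ 2)
    have h2 : 2 * x ^ 1 / (2 * σ ^ 2) = x / σ ^ 2 := by
      field_simp
    rw [h2] at h1
    exact h1.hasDerivWithinAt
  have hinj : Set.InjOn f (Set.Ioi 0) := by
    intro a ha b hb hab
    have ha0 : (0:ℝ) < a := ha
    have hb0 : (0:ℝ) < b := hb
    have h0 : a ^ 2 * (2 * σ ^ 2) = b ^ 2 * (2 * σ ^ 2) := by
      have h := hab
      simp only [hf, div_eq_div_iff (show (2 * σ ^ 2 : ℝ) ≠ 0 by positivity)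
        (show (2 * σ ^ 2 : ℝ) ≠ 0 by positivity)] at h
      exact h
    have h1 : a ^ 2 = b ^ 2 := mul_right_cancel₀ (by positivity) h0
    have := congrArg Real.sqrt h1
    rwa [Real.sqrt_sq ha0.le, Real.sqrt_sq hb0.le] at this
  have himg : f '' Set.Ioi 0 = Set.Ioi 0 := by
    ext u
    constructor
    · rintro ⟨r, hr, rfl⟩
      have : (0:ℝ) < r := hr
      exact div_pos (pow_pos this 2) (by positivity)
    · intro hu
      have hu0 : (0:ℝ) < u := hu
      refine ⟨Real.sqrt (2 * σ ^ 2 * u), Real.sqrt_pos.mpr (by positivity), ?_⟩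
      simp only [hf]
      rw [Real.sq_sqrt (by positivity)]
      field_simp
  have key := integral_image_eq_integral_abs_deriv_smul measurableSet_Ioi hderiv hinj g
  rw [himg] at key
  have lhs_eq : (∫ r in Set.Ioi (0:ℝ),
        Real.logb 2 (c * r ^ 2) * ((r / σ ^ 2) * Real.exp (-r ^ 2 / (2 * σ ^ 2))))
      = ∫ x in Set.Ioi (0:ℝ), |x / σ ^ 2| • g (f x) := by
    refine setIntegral_congr_fun measurableSet_Ioi fun r hr => ?_
    have hr0 : (0:ℝ) < r := hr
    simp only [hg, hf, smul_eq_mul]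
    rw [abs_of_pos (by positivity)]
    have h1 : 2 * c * σ ^ 2 * (r ^ 2 / (2 * σ ^ 2)) = c * r ^ 2 := by
      field_simp
    have h2 : -(r ^ 2 / (2 * σ ^ 2)) = -r ^ 2 / (2 * σ ^ 2) := by ring
    rw [h1, h2]
    ring
  rw [lhs_eq, ← key]
  have hsplit : Set.EqOn g (fun u =>
      (Real.log (2 * c * σ ^ 2) / Real.log 2) * Real.exp (-u)
        + (Real.log 2)⁻¹ * (Real.log u * Real.exp (-u))) (Set.Ioi 0) := by
    intro u hu
    have hu0 : (0:ℝ) < u := hu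
    simp only [hg, Real.logb, Real.log_mul (by positivity : (2 * c * σ ^ 2 : ℝ) ≠ 0)
      (ne_of_gt hu0)]
    ring
  rw [setIntegral_congr_fun measurableSet_Ioi hsplit]
  have hexp_int : IntegrableOn (fun u : ℝ => Real.exp (-u)) (Set.Ioi 0) := by
    have := exp_neg_integrableOn_Ioi 0 (one_pos : (0:ℝ) < 1)
    refine this.congr_fun (fun x _ => by norm_num) measurableSet_Ioi
  have hint1 : IntegrableOn (fun u : ℝ =>
      (Real.log (2 * c * σ ^ 2) / Real.log 2) * Real.exp (-u)) (Set.Ioi 0) :=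
    hexp_int.const_mul _
  have hint2 : IntegrableOn (fun u : ℝ =>
      (Real.log 2)⁻¹ * (Real.log u * Real.exp (-u))) (Set.Ioi 0) :=
    integrableOn_log_mul_exp_neg.const_mul _
  rw [integral_add hint1 hint2, integral_const_mul, integral_const_mul,
    integral_exp_neg_Ioi_zero, integral_log_mul_exp_neg]
  have hlog2 : Real.log 2 ≠ 0 := ne_of_gt (Real.log_pos one_lt_two)
  have h1 : Real.log (2 * c * σ ^ 2) = Real.log 2 + Real.log c + 2 * Real.log σ := by
    rw [Real.log_mul (by positivity) (by positivity), Real.log_mul (by norm_num) hc.ne',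
      Real.log_pow]
    push_cast
    ring
  have h2 : Real.log (Real.sqrt c * σ) = Real.log c / 2 + Real.log σ := by
    rw [Real.log_mul (Real.sqrt_ne_zero'.mpr hc) hσ.ne', Real.log_sqrt hc.le]
  rw [h1, h2]
  field_simp
  ring
end
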